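/- arXiv:2008.02244 — 3 statements merged into one kernel-verified Lean document; each statement's English description precedes it below -/
import Mathlib

section
/- Let Ω ⊂ ℝ³ be a bounded open set satisfying the lower volume-density bound: there exists c > 0 such that the Lebesgue measure of B(x,r) ∩ Ω is at least c·r³ for every x in the closure of Ω and every r ∈ (0,1]. Let α > 0 and s > 0 with α·s ≥ 3, and let f : ℝ³ → ℝ be α-Hölder continuous on the closure of Ω with constant L (i.e. |f(x) − f(x')| ≤ L·‖x − x'‖^α for all x, x' in the closure of Ω), with f(x) > 0 for almost every x ∈ Ω and ∫_Ω f(x)^{−s} dx < ∞. Then there exists ε > 0 such that f(x) ≥ ε for every x in the closure of Ω. -/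
/-!
If `f` is positive on the compact set `closure Ω`, continuity (from the Hölder bound) makes it
bounded below there. So suppose `f x₀ ≤ 0` for some `x₀ ∈ closure Ω`. Then `f ≤ L r^α` on
`B(x₀, r) ∩ Ω`, and the density bound gives
`∫_{B(x₀,r) ∩ Ω} f^{-s} ≥ (L r^α)^{-s} c r^3 ≥ c L^{-s}` for all `r ≤ 1`, because `α s ≥ 3`.
If `f^{-s}` were integrable on `Ω`, these integrals would tend to the integral over `{x₀}`,
which is `0`.
-/

open MeasureTheory Filter Metric Topology

theorem continuousOn_of_dist_le_mul_rpow {X Y : Type*} [PseudoMetricSpace X]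
    [PseudoMetricSpace Y] {f : X → Y} {s : Set X} {L α : ℝ} (hα : 0 < α)
    (hf : ∀ x ∈ s, ∀ y ∈ s, dist (f x) (f y) ≤ L * dist x y ^ α) : ContinuousOn f s := by
  intro x hx
  have hbound : Tendsto (fun y => L * dist y x ^ α) (𝓝[s] x) (𝓝 0) := by
    have : Continuous fun y => L * dist y x ^ α := by fun_prop (disch := exact hα.le)
    simpa [Real.zero_rpow hα.ne'] using (this.tendsto x).mono_left nhdsWithin_le_nhds
  rw [ContinuousWithinAt, tendsto_iff_dist_tendsto_zero]
  refine squeeze_zero' (Eventually.of_forall fun _ => dist_nonneg) ?_ hbound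
  filter_upwards [self_mem_nhdsWithin] with y hy using hf y hy x hx

theorem mul_rpow_neg_le_rpow_mul_rpow_neg {c L r α s : ℝ} {d : ℕ} (hc : 0 ≤ c) (hL : 0 < L)
    (hr : 0 < r) (hr1 : r ≤ 1) (hαs : d ≤ α * s) :
    c * L ^ (-s) ≤ (L * r ^ α) ^ (-s) * (c * r ^ d) := by
  have hr_pow : 1 ≤ r ^ ((d : ℝ) - α * s) :=
    Real.one_le_rpow_of_pos_of_le_one_of_nonpos hr hr1 (by linarith)
  calc c * L ^ (-s) = c * L ^ (-s) * 1 := (mul_one _).symm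
    _ ≤ c * L ^ (-s) * r ^ ((d : ℝ) - α * s) := by gcongr
    _ = (L * r ^ α) ^ (-s) * (c * r ^ d) := by
      rw [Real.mul_rpow hL.le (by positivity), ← Real.rpow_mul hr.le, sub_eq_add_neg,
        Real.rpow_add hr, Real.rpow_natCast, mul_neg]
      ring

theorem tendsto_measure_ball_nhdsGT_zero {X : Type*} [MetricSpace X] [MeasurableSpace X]
    [OpensMeasurableSpace X] (ν : Measure X) [IsFiniteMeasure ν] [NullSingletonClass ν] (x : X) :
    Tendsto (fun r => ν (ball x r)) (𝓝[>] 0) (𝓝 0) := by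
  simpa using tendsto_measure_thickening_of_isClosed (μ := ν)
    ⟨1, one_pos, measure_ne_top _ _⟩ (isClosed_singleton (x := x))

section

variable {X : Type*} [MetricSpace X] [MeasurableSpace X] [OpensMeasurableSpace X]
  {μ : Measure X} {Ω : Set X} {f : X → ℝ} {x₀ : X} {c L α s : ℝ} {d : ℕ}

theorem rpow_neg_mul_le_setLIntegral_ball (hL : 0 ≤ L) (hα : 0 ≤ α) (hs : 0 ≤ s)
    (hf_le : ∀ x ∈ closure Ω, f x ≤ L * dist x x₀ ^ α) (hf_pos : ∀ᵐ x ∂μ.restrict Ω, 0 < f x)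
    (r : ℝ) :
    ENNReal.ofReal ((L * r ^ α) ^ (-s)) * μ (ball x₀ r ∩ Ω) ≤
      ∫⁻ x in ball x₀ r, ENNReal.ofReal (f x ^ (-s)) ∂μ.restrict Ω := by
  rw [← Measure.restrict_apply measurableSet_ball, ← setLIntegral_const]
  have hclosure : ∀ᵐ x ∂μ.restrict Ω, x ∈ closure Ω :=
    ae_restrict_of_ae_restrict_of_subset subset_closure
      (ae_restrict_mem isClosed_closure.measurableSet)
  refine lintegral_mono_ae ?_
  filter_upwards [ae_restrict_mem measurableSet_ball, ae_restrict_of_ae hf_pos,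
    ae_restrict_of_ae hclosure] with x hx_ball hfx hx_closure
  have hfx_le : f x ≤ L * r ^ α := (hf_le x hx_closure).trans (by
    gcongr
    exact (mem_ball.1 hx_ball).le)
  exact ENNReal.ofReal_le_ofReal (Real.rpow_le_rpow_of_nonpos hfx hfx_le (neg_nonpos.2 hs))

theorem ofReal_mul_rpow_neg_le_setLIntegral_ball (hc : 0 ≤ c) (hL : 0 < L) (hα : 0 ≤ α)
    (hs : 0 ≤ s) (hαs : d ≤ α * s)
    (hdens : ∀ r : ℝ, 0 < r → r ≤ 1 → ENNReal.ofReal (c * r ^ d) ≤ μ (ball x₀ r ∩ Ω))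
    (hf_le : ∀ x ∈ closure Ω, f x ≤ L * dist x x₀ ^ α) (hf_pos : ∀ᵐ x ∂μ.restrict Ω, 0 < f x)
    {r : ℝ} (hr : 0 < r) (hr1 : r ≤ 1) :
    ENNReal.ofReal (c * L ^ (-s)) ≤ ∫⁻ x in ball x₀ r, ENNReal.ofReal (f x ^ (-s)) ∂μ.restrict Ω :=
  calc ENNReal.ofReal (c * L ^ (-s))
      ≤ ENNReal.ofReal ((L * r ^ α) ^ (-s)) * ENNReal.ofReal (c * r ^ d) := by
        rw [← ENNReal.ofReal_mul (by positivity)]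
        exact ENNReal.ofReal_le_ofReal (mul_rpow_neg_le_rpow_mul_rpow_neg hc hL hr hr1 hαs)
    _ ≤ ENNReal.ofReal ((L * r ^ α) ^ (-s)) * μ (ball x₀ r ∩ Ω) := by
        gcongr
        exact hdens r hr hr1
    _ ≤ _ := rpow_neg_mul_le_setLIntegral_ball hL.le hα hs hf_le hf_pos r

theorem lintegral_rpow_neg_eq_top_of_le_mul_dist_rpow [NullSingletonClass μ] (hc : 0 < c)
    (hL : 0 < L) (hα : 0 ≤ α) (hs : 0 ≤ s) (hαs : d ≤ α * s)
    (hdens : ∀ r : ℝ, 0 < r → r ≤ 1 → ENNReal.ofReal (c * r ^ d) ≤ μ (ball x₀ r ∩ Ω))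
    (hf_le : ∀ x ∈ closure Ω, f x ≤ L * dist x x₀ ^ α) (hf_pos : ∀ᵐ x ∂μ.restrict Ω, 0 < f x) :
    ∫⁻ x in Ω, ENNReal.ofReal (f x ^ (-s)) ∂μ = ⊤ := by
  by_contra hfin
  set ν := (μ.restrict Ω).withDensity fun x => ENNReal.ofReal (f x ^ (-s))
  have : IsFiniteMeasure ν := ⟨by simpa [ν, lt_top_iff_ne_top] using hfin⟩
  have hK : 0 < ENNReal.ofReal (c * L ^ (-s)) := by
    have := Real.rpow_pos_of_pos hL (-s)
    positivity
  have hIoc : Set.Ioc (0 : ℝ) 1 ∈ 𝓝[>] 0 := Ioc_mem_nhdsGT one_pos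
  obtain ⟨r, hsmall, hr, hr1⟩ :=
    ((tendsto_measure_ball_nhdsGT_zero ν x₀).eventually (gt_mem_nhds hK) |>.and hIoc).exists
  refine hsmall.not_ge ?_
  rw [withDensity_apply _ measurableSet_ball]
  exact ofReal_mul_rpow_neg_le_setLIntegral_ball hc.le hL hα hs hαs hdens hf_le hf_pos hr hr1

end

theorem healey_kroemer_bounded_away_from_zero_general
    (Ω : Set (EuclideanSpace ℝ (Fin 3)))
    (hΩ_bdd : Bornology.IsBounded Ω)
    (c : ℝ) (hc : 0 < c)
    (hdens : ∀ x ∈ closure Ω, ∀ r : ℝ, 0 < r → r ≤ 1 →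
      ENNReal.ofReal (c * r ^ 3) ≤ volume (Metric.ball x r ∩ Ω))
    (α s : ℝ) (hα : 0 < α) (hs : 0 < s) (hαs : 3 ≤ α * s)
    (f : EuclideanSpace ℝ (Fin 3) → ℝ) (L : ℝ)
    (hf_hold : ∀ x ∈ closure Ω, ∀ x' ∈ closure Ω, |f x - f x'| ≤ L * ‖x - x'‖ ^ α)
    (hf_pos : ∀ᵐ x ∂(volume.restrict Ω), 0 < f x)
    (hf_int : ∫⁻ x in Ω, ENNReal.ofReal (f x ^ (-s)) ≠ ⊤) :
    ∃ ε : ℝ, 0 < ε ∧ ∀ x ∈ closure Ω, ε ≤ f x := by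
  have hf_dist : ∀ x ∈ closure Ω, ∀ x' ∈ closure Ω,
      dist (f x) (f x') ≤ max L 1 * dist x x' ^ α := fun x hx x' hx' => by
    rw [Real.dist_eq, dist_eq_norm]
    exact (hf_hold x hx x' hx').trans (by gcongr; exact le_max_left _ _)
  have hf_pos_closure : ∀ x₀ ∈ closure Ω, 0 < f x₀ := by
    intro x₀ hx₀
    by_contra! hfx₀
    have hf_le : ∀ x ∈ closure Ω, f x ≤ max L 1 * dist x x₀ ^ α := fun x hx => by
      linarith [le_abs_self (f x - f x₀), (Real.dist_eq _ _).symm.trans_le (hf_dist x hx x₀ hx₀)]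
    exact hf_int (lintegral_rpow_neg_eq_top_of_le_mul_dist_rpow (d := 3) hc
      (lt_max_of_lt_right one_pos) hα.le hs.le (by exact_mod_cast hαs) (hdens x₀ hx₀) hf_le hf_pos)
  exact hΩ_bdd.isCompact_closure.exists_forall_le'
    (continuousOn_of_dist_le_mul_rpow hα hf_dist) hf_pos_closure

/-- (Core of the Healey–Krömer Corollary.) On a bounded open
set `Ω ⊂ ℝ³` with a lower volume-density bound, an `α`-Hölder continuous
function `f` that is a.e. positive and whose inverse `s`-th power is integrable
(`α·s ≥ 3`) is bounded away from zero on the closure of `Ω`. -/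
theorem healey_kroemer_bounded_away_from_zero
    (Ω : Set (EuclideanSpace ℝ (Fin 3))) (hΩ_open : IsOpen Ω)
    (hΩ_bdd : Bornology.IsBounded Ω)
    (c : ℝ) (hc : 0 < c)
    (hdens : ∀ x ∈ closure Ω, ∀ r : ℝ, 0 < r → r ≤ 1 →
      ENNReal.ofReal (c * r ^ 3) ≤ volume (Metric.ball x r ∩ Ω))
    (α s : ℝ) (hα : 0 < α) (hs : 0 < s) (hαs : 3 ≤ α * s)
    (f : EuclideanSpace ℝ (Fin 3) → ℝ) (L : ℝ)
    (hf_hold : ∀ x ∈ closure Ω, ∀ x' ∈ closure Ω, |f x - f x'| ≤ L * ‖x - x'‖ ^ α)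
    (hf_pos : ∀ᵐ x ∂(volume.restrict Ω), 0 < f x)
    (hf_int : ∫⁻ x in Ω, ENNReal.ofReal (f x ^ (-s)) ≠ ⊤) :
    ∃ ε : ℝ, 0 < ε ∧ ∀ x ∈ closure Ω, ε ≤ f x :=
  healey_kroemer_bounded_away_from_zero_general Ω hΩ_bdd c hc hdens α s hα hs hαs f L hf_hold hf_pos
    hf_int
end

section
/- Let Ω ⊂ ℝ³ be a bounded open set satisfying the lower volume-density bound: there exists c > 0 such that the Lebesgue measure of B(x,r) ∩ Ω is at least c·r³ for every x in the closure of Ω and every r ∈ (0,1]. Let α > 0 and s > 0 with α·s > 3, and let L > 0, M > 0. Let (f_k) be a sequence of functions ℝ³ → ℝ such that each f_k is α-Hölder continuous on the closure of Ω with the same constant L, f_k(x) > 0 for almost every x ∈ Ω, and ∫_Ω f_k(x)^{−s} dx ≤ M for every k. Then there exists ε > 0 such that f_k(x) ≥ ε for every k and every x in the closure of Ω. -/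
open MeasureTheory

/-- (Uniform Healey–Krömer bound.) A sequence of functions on
a bounded open set `Ω ⊂ ℝ³` with a lower volume-density bound, uniformly
`α`-Hölder continuous, a.e. positive, and with uniformly bounded integrals of
the inverse `s`-th powers (`α·s > 3`), is uniformly bounded away from zero on
the closure of `Ω`. -/
theorem healey_kroemer_uniformly_bounded_away_from_zero
    (Ω : Set (EuclideanSpace ℝ (Fin 3))) (hΩ_open : IsOpen Ω)
    (hΩ_bdd : Bornology.IsBounded Ω)
    (c : ℝ) (hc : 0 < c)
    (hdens : ∀ x ∈ closure Ω, ∀ r : ℝ, 0 < r → r ≤ 1 →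
      ENNReal.ofReal (c * r ^ 3) ≤ volume (Metric.ball x r ∩ Ω))
    (α s : ℝ) (hα : 0 < α) (hs : 0 < s) (hαs : 3 < α * s)
    (L M : ℝ) (hL : 0 < L) (hM : 0 < M)
    (f : ℕ → EuclideanSpace ℝ (Fin 3) → ℝ)
    (hf_hold : ∀ k, ∀ x ∈ closure Ω, ∀ x' ∈ closure Ω,
      |f k x - f k x'| ≤ L * ‖x - x'‖ ^ α)
    (hf_pos : ∀ k, ∀ᵐ x ∂(volume.restrict Ω), 0 < f k x)
    (hf_int : ∀ k, (∫⁻ x in Ω, ENNReal.ofReal (f k x ^ (-s))) ≤ ENNReal.ofReal M) :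
    ∃ ε : ℝ, 0 < ε ∧ ∀ k, ∀ x ∈ closure Ω, ε ≤ f k x := by
  set t : ℝ := s - 3 * α⁻¹ with ht_def
  have ht : 0 < t := by
    have h3 : 3 * α⁻¹ < s := by
      rw [mul_inv_lt_iff₀ hα]
      linarith [hαs]
    rw [ht_def]; linarith
  set K : ℝ := c * 2 ^ (-s) * L ^ (-(3 * α⁻¹)) with hK_def
  have hK : 0 < K := by
    have h1 : (0:ℝ) < (2:ℝ) ^ (-s) := Real.rpow_pos_of_pos (by norm_num) _
    have h2 : (0:ℝ) < L ^ (-(3 * α⁻¹)) := Real.rpow_pos_of_pos hL _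
    positivity
  set δ : ℝ := (K / M / 2) ^ t⁻¹ with hδ_def
  have hδ : 0 < δ := Real.rpow_pos_of_pos (by positivity) _
  refine ⟨min L δ, lt_min hL hδ, ?_⟩
  set ε : ℝ := min L δ with hε_def
  have hε : 0 < ε := lt_min hL hδ
  intro k x₀ hx₀
  by_contra h
  push_neg at h
  set r : ℝ := (ε / L) ^ α⁻¹ with hr_def
  have hεL : ε ≤ L := min_le_left _ _
  have hr0 : 0 < r := Real.rpow_pos_of_pos (by positivity) _
  have hr1 : r ≤ 1 :=
    Real.rpow_le_one (by positivity) (by rw [div_le_one hL]; exact hεL) (by positivity)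
  have hrα : L * r ^ α = ε := by
    rw [hr_def, Real.rpow_inv_rpow (by positivity) hα.ne']
    field_simp
  have hmeas : MeasurableSet (Metric.ball x₀ r ∩ Ω) :=
    (Metric.isOpen_ball.inter hΩ_open).measurableSet
  -- a.e. pointwise lower bound on the inverse power over the small ball
  have hae : ∀ᵐ x ∂(volume.restrict (Metric.ball x₀ r ∩ Ω)),
      ENNReal.ofReal ((2 * ε) ^ (-s)) ≤ ENNReal.ofReal (f k x ^ (-s)) := by
    have h1 : ∀ᵐ x ∂(volume.restrict (Metric.ball x₀ r ∩ Ω)), 0 < f k x :=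
      ae_restrict_of_ae_restrict_of_subset Set.inter_subset_right (hf_pos k)
    have h2 : ∀ᵐ x ∂(volume.restrict (Metric.ball x₀ r ∩ Ω)), x ∈ Metric.ball x₀ r ∩ Ω := ae_restrict_mem hmeas
    filter_upwards [h1, h2] with x hx hxm
    have hxΩ : x ∈ closure Ω := subset_closure hxm.2
    have hlt : f k x < 2 * ε := by
      have hhold := hf_hold k x hxΩ x₀ hx₀
      have hdist : ‖x - x₀‖ ≤ r := by
        have := hxm.1
        rw [Metric.mem_ball, dist_eq_norm] at this
        exact this.le
      have hnorm : ‖x - x₀‖ ^ α ≤ r ^ α :=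
        Real.rpow_le_rpow (norm_nonneg _) hdist hα.le
      have habs : f k x - f k x₀ ≤ L * r ^ α := by
        calc f k x - f k x₀ ≤ |f k x - f k x₀| := le_abs_self _
          _ ≤ L * ‖x - x₀‖ ^ α := hhold
          _ ≤ L * r ^ α := by nlinarith
      rw [hrα] at habs
      linarith
    exact ENNReal.ofReal_le_ofReal
      (Real.rpow_le_rpow_of_nonpos hx hlt.le (neg_nonpos.mpr hs.le))
  -- chain of integral inequalities
  have hchain : ENNReal.ofReal ((2 * ε) ^ (-s)) * ENNReal.ofReal (c * r ^ 3)
      ≤ ENNReal.ofReal M := by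
    calc ENNReal.ofReal ((2 * ε) ^ (-s)) * ENNReal.ofReal (c * r ^ 3)
        ≤ ENNReal.ofReal ((2 * ε) ^ (-s)) * volume (Metric.ball x₀ r ∩ Ω) :=
          mul_le_mul_right (hdens x₀ hx₀ r hr0 hr1) _
      _ = ∫⁻ _ in Metric.ball x₀ r ∩ Ω, ENNReal.ofReal ((2 * ε) ^ (-s)) :=
          (setLIntegral_const _ _).symm
      _ ≤ ∫⁻ x in Metric.ball x₀ r ∩ Ω, ENNReal.ofReal (f k x ^ (-s)) :=
          lintegral_mono_ae hae
      _ ≤ ∫⁻ x in Ω, ENNReal.ofReal (f k x ^ (-s)) :=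
          lintegral_mono_set Set.inter_subset_right
      _ ≤ ENNReal.ofReal M := hf_int k
  rw [← ENNReal.ofReal_mul (by positivity)] at hchain
  have hre : (2 * ε) ^ (-s) * (c * r ^ 3) ≤ M :=
    (ENNReal.ofReal_le_ofReal_iff hM.le).mp hchain
  -- turn the inequality into `K ≤ M * ε ^ t` and contradict the choice of `ε`
  have e1 : r ^ 3 = ε ^ (3 * α⁻¹) / L ^ (3 * α⁻¹) := by
    have h30 : ((3:ℕ):ℝ) = (3:ℝ) := by norm_num
    rw [hr_def, ← Real.rpow_natCast ((ε / L) ^ α⁻¹) 3,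
      ← Real.rpow_mul (by positivity), h30]
    rw [show α⁻¹ * 3 = 3 * α⁻¹ by ring, Real.div_rpow hε.le hL.le]
  have e2 : (2 * ε) ^ (-s) = 2 ^ (-s) * ε ^ (-s) :=
    Real.mul_rpow (by norm_num) hε.le
  have e3 : ε ^ (-s) * ε ^ (3 * α⁻¹) = (ε ^ t)⁻¹ := by
    rw [← Real.rpow_add hε, ← Real.rpow_neg hε.le]
    congr 1
    rw [ht_def]; ring
  have hεt : 0 < ε ^ t := Real.rpow_pos_of_pos hε _
  have hkey : K * (ε ^ t)⁻¹ ≤ M := by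
    calc K * (ε ^ t)⁻¹
        = (2 * ε) ^ (-s) * (c * r ^ 3) := by
          rw [e1, e2, hK_def, Real.rpow_neg hL.le, ← e3]
          field_simp
      _ ≤ M := hre
  have hKle : K ≤ M * ε ^ t := by
    have : K / ε ^ t ≤ M := by rwa [div_eq_mul_inv]
    exact (div_le_iff₀ hεt).mp this
  have hεtδ : ε ^ t ≤ K / M / 2 := by
    calc ε ^ t ≤ δ ^ t := Real.rpow_le_rpow hε.le (min_le_right _ _) ht.le
      _ = K / M / 2 := Real.rpow_inv_rpow (by positivity) ht.ne'
  have : K ≤ K / 2 := by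
    calc K ≤ M * ε ^ t := hKle
      _ ≤ M * (K / M / 2) := by nlinarith
      _ = K / 2 := by field_simp
  linarith
end

section
/- Let Ω ⊂ ℝ³ be a measurable set of finite Lebesgue measure, let φ : ℝ³ → ℝ be continuous, and let α > 0. Let f_k : Ω → ℝ³ be measurable with sup_k ∫_Ω |f_k(x)|^α dx < ∞, and let B_k, B : Ω → ℝ^{3×3} be measurable matrix fields, uniformly bounded (sup_k sup_{x∈Ω} |B_k(x)| < ∞ and sup_{x∈Ω} |B(x)| < ∞), with sup_{x∈Ω} |B_k(x) − B(x)| → 0 as k → ∞. Then the functions x ↦ φ(B_k(x)·f_k(x)) − φ(B(x)·f_k(x)) converge to 0 in measure on Ω. -/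
/-!
By Markov's inequality the `L^α` bound makes the `f_k` bounded in measure: outside a set of
measure `≤ η`, independent of `k`, one has `‖f_k‖ < R`. For `x ∈ Ω` and `‖w‖ ≤ R` the pairs
`(B₀ x, w)` range over a compact set, near which `(A, w) ↦ φ (A w)` is uniformly continuous, so
`φ (B_k x w) - φ (B₀ x w) → 0` uniformly on `Ω × closedBall 0 R`.
-/

open MeasureTheory Filter Topology Set Metric
open scoped ENNReal

attribute [local instance] Matrix.frobeniusNormedAddCommGroup Matrix.frobeniusNormedSpace

theorem TendstoUniformlyOn.prodMap_id {α β γ ι : Type*} [UniformSpace β] [UniformSpace γ]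
    {F : ι → α → β} {f : α → β} {l : Filter ι} {s : Set α} (h : TendstoUniformlyOn F f l s)
    (t : Set γ) :
    TendstoUniformlyOn (fun i => Prod.map (F i) id) (Prod.map f id) l (s ×ˢ t) := by
  rw [tendstoUniformlyOn_iff_tendsto] at h ⊢
  rw [uniformity_prod_eq_comap_prod, tendsto_comap_iff]
  have hfst : Tendsto (fun q : ι × (α × γ) => (q.1, q.2.1)) (l ×ˢ 𝓟 (s ×ˢ t)) (l ×ˢ 𝓟 s) :=
    tendsto_fst.prodMk
      ((tendsto_principal_principal.2 fun _ (hp : _ ∈ s ×ˢ t) => hp.1).comp tendsto_snd)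
  exact (h.comp hfst).prodMk (tendsto_diag_uniformity (fun q : ι × (α × γ) => q.2.2) _)

theorem TendstoUniformlyOn.comp_of_isCompact {α β γ ι : Type*} [UniformSpace β] [UniformSpace γ]
    {F : ι → α → β} {f : α → β} {l : Filter ι} {s : Set α} {K : Set β} {φ : β → γ}
    (h : TendstoUniformlyOn F f l s) (hK : IsCompact K) (hfK : MapsTo f s K)
    (hφ : ∀ b ∈ K, ContinuousAt φ b) :
    TendstoUniformlyOn (fun i => φ ∘ F i) (φ ∘ f) l s := by
  intro r hr
  filter_upwards [h _ (hK.uniformContinuousAt_of_continuousAt φ hφ hr)] with i hi x hx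
  exact hi x hx (hfK hx)

namespace MeasureTheory

variable {X ι E : Type*} [MeasurableSpace X] [SeminormedAddCommGroup E]

def BoundedInMeasure (μ : Measure X) (f : ι → X → E) : Prop :=
  ∀ η > 0, ∃ R, ∀ i, μ {x | R ≤ ‖f i x‖} ≤ η

theorem boundedInMeasure_of_lintegral_rpow_le {μ : Measure X} {f : ι → X → E} {α : ℝ}
    {C : ℝ≥0∞} (hα : 0 < α) (hf : ∀ i, AEStronglyMeasurable (f i) μ)
    (hC : ∀ i, ∫⁻ x, ENNReal.ofReal (‖f i x‖ ^ α) ∂μ ≤ C) (hC_ne_top : C ≠ ∞) :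
    BoundedInMeasure μ f := by
  intro η hη
  have hmarkov : Tendsto (fun R : ℝ => C / ENNReal.ofReal (R ^ α)) atTop (𝓝 0) := by
    simpa using ENNReal.Tendsto.const_div
      (ENNReal.tendsto_ofReal_atTop.comp (tendsto_rpow_atTop hα)) (.inr hC_ne_top)
  obtain ⟨R, hRη, hR⟩ :=
    ((hmarkov.eventually (gt_mem_nhds hη)).and (eventually_gt_atTop 0)).exists
  refine ⟨R, fun i => ?_⟩
  calc μ {x | R ≤ ‖f i x‖}
      ≤ μ {x | ENNReal.ofReal (R ^ α) ≤ ENNReal.ofReal (‖f i x‖ ^ α)} :=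
        measure_mono fun x hx => ENNReal.ofReal_le_ofReal (Real.rpow_le_rpow hR.le hx hα.le)
    _ ≤ (∫⁻ x, ENNReal.ofReal (‖f i x‖ ^ α) ∂μ) / ENNReal.ofReal (R ^ α) :=
        meas_ge_le_lintegral_div ((hf i).norm.aemeasurable.pow_const α).ennreal_ofReal
          (by simpa using Real.rpow_pos_of_pos hR α) ENNReal.ofReal_ne_top
    _ ≤ C / ENNReal.ofReal (R ^ α) := by gcongr; exact hC i
    _ ≤ η := hRη.le

theorem BoundedInMeasure.tendstoInMeasure_sub {F : Type*} [SeminormedAddCommGroup F]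
    {μ : Measure X} {f : ι → X → E} {l : Filter ι} {Ω : Set X} {G : ι → X × E → F}
    {G₀ : X × E → F} (hf : BoundedInMeasure μ f) (hΩ : ∀ᵐ x ∂μ, x ∈ Ω)
    (hG : ∀ R, TendstoUniformlyOn G G₀ l (Ω ×ˢ closedBall 0 R)) :
    TendstoInMeasure μ (fun i x => G i (x, f i x) - G₀ (x, f i x)) l (fun _ => 0) := by
  rw [tendstoInMeasure_iff_norm]
  intro ε hε
  rw [ENNReal.tendsto_nhds_zero]
  intro η hη
  obtain ⟨R, hR⟩ := hf η hη
  filter_upwards [Metric.tendstoUniformlyOn_iff.1 (hG R) ε hε] with i hi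
  refine (measure_mono_ae ?_).trans (hR i)
  filter_upwards [hΩ] with x hx (hεx : ε ≤ _)
  change R ≤ ‖f i x‖
  by_contra! hxR
  have hclose := hi (x, f i x) ⟨hx, mem_closedBall_zero_iff.2 hxR.le⟩
  exact hεx.not_gt (by simpa [dist_eq_norm'] using hclose)

end MeasureTheory

theorem phi_difference_tendstoInMeasure_general
    (Ω : Set (EuclideanSpace ℝ (Fin 3))) (hΩ : MeasurableSet Ω)
    (φ : (Fin 3 → ℝ) → ℝ) (hφ : Continuous φ)
    (α : ℝ) (hα : 0 < α)
    (f : ℕ → EuclideanSpace ℝ (Fin 3) → (Fin 3 → ℝ))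
    (hf_meas : ∀ k, Measurable (f k))
    (hf_bdd : ∃ K : ℝ, ∀ k,
      (∫⁻ x in Ω, ENNReal.ofReal (‖f k x‖ ^ α)) ≤ ENNReal.ofReal K)
    (B : ℕ → EuclideanSpace ℝ (Fin 3) → Matrix (Fin 3) (Fin 3) ℝ)
    (B₀ : EuclideanSpace ℝ (Fin 3) → Matrix (Fin 3) (Fin 3) ℝ)
    (hB_bdd : ∃ Mb : ℝ, (∀ k, ∀ x ∈ Ω, ‖B k x‖ ≤ Mb) ∧ (∀ x ∈ Ω, ‖B₀ x‖ ≤ Mb))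
    (hB_unif : TendstoUniformlyOn (fun k => B k) B₀ atTop Ω) :
    TendstoInMeasure (volume.restrict Ω)
      (fun k x => φ ((B k x).mulVec (f k x)) - φ ((B₀ x).mulVec (f k x)))
      atTop (fun _ => 0) := by
  obtain ⟨K, hK⟩ := hf_bdd
  obtain ⟨M, -, hB₀M⟩ := hB_bdd
  have hf : BoundedInMeasure (volume.restrict Ω) f :=
    boundedInMeasure_of_lintegral_rpow_le hα (fun k => (hf_meas k).aestronglyMeasurable) hK
      ENNReal.ofReal_ne_top
  have hΦ : Continuous fun p : Matrix (Fin 3) (Fin 3) ℝ × (Fin 3 → ℝ) => φ (p.1.mulVec p.2) :=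
    hφ.comp (continuous_fst.matrix_mulVec continuous_snd)
  have hunif (R : ℝ) : TendstoUniformlyOn (fun k p => φ ((B k p.1).mulVec p.2))
      (fun p => φ ((B₀ p.1).mulVec p.2)) atTop (Ω ×ˢ closedBall 0 R) :=
    (hB_unif.prodMap_id (closedBall 0 R)).comp_of_isCompact
      ((isCompact_closedBall 0 M).prod (isCompact_closedBall 0 R))
      (fun p hp => ⟨mem_closedBall_zero_iff.2 (hB₀M p.1 hp.1), hp.2⟩) fun _ _ => hΦ.continuousAt
  -- `(· :)` lets `hunif` fix `G`, avoiding higher-order unification against the goal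
  exact (hf.tendstoInMeasure_sub (ae_restrict_mem hΩ) hunif :)

/-- If `φ` is continuous, the vector fields `f_k` are bounded
in `L^α`, and the matrix fields `B_k` are uniformly bounded and converge
uniformly to `B₀`, then `φ(B_k f_k) − φ(B₀ f_k) → 0` in measure on `Ω`. -/
theorem phi_difference_tendstoInMeasure
    (Ω : Set (EuclideanSpace ℝ (Fin 3))) (hΩ : MeasurableSet Ω)
    (hΩfin : volume Ω < ⊤)
    (φ : (Fin 3 → ℝ) → ℝ) (hφ : Continuous φ)
    (α : ℝ) (hα : 0 < α)
    (f : ℕ → EuclideanSpace ℝ (Fin 3) → (Fin 3 → ℝ))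
    (hf_meas : ∀ k, Measurable (f k))
    (hf_bdd : ∃ K : ℝ, ∀ k,
      (∫⁻ x in Ω, ENNReal.ofReal (‖f k x‖ ^ α)) ≤ ENNReal.ofReal K)
    (B : ℕ → EuclideanSpace ℝ (Fin 3) → Matrix (Fin 3) (Fin 3) ℝ)
    (B₀ : EuclideanSpace ℝ (Fin 3) → Matrix (Fin 3) (Fin 3) ℝ)
    (hB_meas : ∀ k, StronglyMeasurable (B k)) (hB₀_meas : StronglyMeasurable B₀)
    (hB_bdd : ∃ Mb : ℝ, (∀ k, ∀ x ∈ Ω, ‖B k x‖ ≤ Mb) ∧ (∀ x ∈ Ω, ‖B₀ x‖ ≤ Mb))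
    (hB_unif : TendstoUniformlyOn (fun k => B k) B₀ atTop Ω) :
    TendstoInMeasure (volume.restrict Ω)
      (fun k x => φ ((B k x).mulVec (f k x)) - φ ((B₀ x).mulVec (f k x)))
      atTop (fun _ => 0) :=
  phi_difference_tendstoInMeasure_general Ω hΩ φ hφ α hα f hf_meas hf_bdd B B₀ hB_bdd hB_unif
end
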